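/- arXiv:1312.7320 — 2 statements merged into one kernel-verified Lean document; each statement's English description precedes it below -/
import Mathlib

section
/- Let $(A, \mathfrak{m}, k)$ be a noetherian local ring and $(F^\bullet, d^\bullet)$ a cochain complex of free $A$-modules of finite rank. Suppose the base change maps $\varphi^p$ and $\varphi^{p-1}$ are both surjective. Then for every $A$-algebra $B$, the natural map $H^p(F^\bullet) \otimes_A B \to H^p(F^\bullet \otimes_A B)$ is an isomorphism. -/
open TensorProduct IsLocalRing

open TensorProduct

section Defs

variable (A : Type*) [CommRing A] (k : Type*) [CommRing k] [Algebra A k]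
variable {M0 M1 M2 : Type*} [AddCommGroup M0] [AddCommGroup M1] [AddCommGroup M2]
  [Module A M0] [Module A M1] [Module A M2]

/-- Cohomology of `M0 → M1 → M2` at the middle spot. -/
abbrev coh (d0 : M0 →ₗ[A] M1) (d1 : M1 →ₗ[A] M2) : Type _ :=
  LinearMap.ker d1 ⧸ (LinearMap.range d0).comap (LinearMap.ker d1).subtype

variable (d0 : M0 →ₗ[A] M1) (d1 : M1 →ₗ[A] M2)

/-- The map on kernels induced by `x ↦ 1 ⊗ x`. -/
noncomputable def kerBaseChange : LinearMap.ker d1 →ₗ[A] LinearMap.ker (d1.baseChange k) :=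
  LinearMap.codRestrict ((LinearMap.ker (d1.baseChange k)).restrictScalars A)
    (((TensorProduct.mk A k M1) 1).comp (LinearMap.ker d1).subtype)
    (fun x => by
      simp [LinearMap.mem_ker, (LinearMap.mem_ker.mp x.2)])

/-- The natural base change map `k ⊗ H(F) → H(F ⊗ k)` on cohomology. -/
noncomputable def cohBaseChange :
    k ⊗[A] coh A d0 d1 →ₗ[k] coh k (d0.baseChange k) (d1.baseChange k) :=
  LinearMap.liftBaseChange k <|
    Submodule.liftQ _
      (((Submodule.mkQ _).restrictScalars A).comp (kerBaseChange A k d1))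
      (by
        rintro ⟨x, hx⟩ ⟨y, rfl⟩
        have : kerBaseChange A k d1 ⟨d0 y, hx⟩ ∈
            (LinearMap.range (d0.baseChange k)).comap
              (LinearMap.ker (d1.baseChange k)).subtype := by
          refine ⟨1 ⊗ₜ y, ?_⟩
          rfl
        simpa [LinearMap.mem_ker, Submodule.Quotient.mk_eq_zero] using this)

end Defs

/-!
Surjectivity of `φ^p` says that every cocycle of `F ⊗ k` is, modulo coboundaries, the image of a
cocycle of `F`. As `d^{p-1}` lands in `ker d^p`, this means `k ⊗ ker d^p → ker (d^p ⊗ k)` is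
surjective, i.e. the map `F^p ⧸ ker d^p → F^{p+1}` induced by `d^p` stays injective after `k ⊗ -`.
Over a local ring such a map into a finite free module is split injective; hence `F^p ⧸ ker d^p` is
projective and `ker d^p` is a direct summand of `F^p`. Both facts survive any base change `A → B`:
the split injection keeps `B ⊗ ker d^p → ker (d^p ⊗ B)` surjective, which gives surjectivity, and a
retraction `F^p → ker d^p` induces a left inverse of the base change map on `H^p`.
-/

open LinearMap

section General

variable {A : Type*} [CommRing A] {B : Type*} [CommRing B] [Algebra A B]
  {M0 M1 M2 : Type*} [AddCommGroup M0] [AddCommGroup M1] [AddCommGroup M2]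
  [Module A M0] [Module A M1] [Module A M2] (d0 : M0 →ₗ[A] M1) (d1 : M1 →ₗ[A] M2)

variable (B) in
noncomputable def baseChangeKer : B ⊗[A] ker d1 →ₗ[B] ker (d1.baseChange B) :=
  codRestrict _ ((ker d1).subtype.baseChange B) fun w => by
    rw [mem_ker, ← comp_apply, ← baseChange_comp, comp_ker_subtype, baseChange_zero,
      LinearMap.zero_apply]

theorem cohBaseChange_comp_baseChange_mkQ :
    cohBaseChange A B d0 d1 ∘ₗ (Submodule.mkQ _).baseChange B =
      Submodule.mkQ _ ∘ₗ baseChangeKer B d1 := by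
  ext z
  simp only [AlgebraTensorModule.curry_apply, curry_apply, coe_restrictScalars, coe_comp,
    Function.comp_apply, baseChange_tmul, cohBaseChange, liftBaseChange_tmul, one_smul]
  rfl

theorem range_cohBaseChange :
    range (cohBaseChange A B d0 d1) = range (Submodule.mkQ _ ∘ₗ baseChangeKer B d1) := by
  rw [← cohBaseChange_comp_baseChange_mkQ, range_comp_of_range_eq_top]
  exact range_eq_top.mpr (baseChange_surjective B (Submodule.mkQ_surjective _))

theorem cohBaseChange_surjective_of_baseChangeKer_surjective
    (h : Function.Surjective (baseChangeKer B d1)) :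
    Function.Surjective (cohBaseChange A B d0 d1) := by
  rw [← range_eq_top, range_cohBaseChange, range_eq_top]
  exact (Submodule.mkQ_surjective _).comp h

theorem baseChangeKer_surjective_of_cohBaseChange_surjective (hd : d1 ∘ₗ d0 = 0)
    (h : Function.Surjective (cohBaseChange A B d0 d1)) :
    Function.Surjective (baseChangeKer B d1) := by
  let d0' : M0 →ₗ[A] ker d1 := codRestrict _ d0 fun x => range_le_ker_iff.mpr hd ⟨x, rfl⟩
  intro x
  obtain ⟨w, hw⟩ : (Submodule.Quotient.mk x : coh B (d0.baseChange B) (d1.baseChange B)) ∈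
      range (Submodule.mkQ _ ∘ₗ baseChangeKer B d1) := by
    rw [← range_cohBaseChange]
    exact h _
  obtain ⟨s, hs⟩ := (Submodule.Quotient.eq _).mp hw
  have hd0' : baseChangeKer B d1 (d0'.baseChange B s) = baseChangeKer B d1 w - x := by
    ext1
    rw [Submodule.coe_subtype] at hs
    rw [← hs]
    change (ker d1).subtype.baseChange B (d0'.baseChange B s) = _
    rw [← comp_apply, ← baseChange_comp, subtype_comp_codRestrict]
  exact ⟨w - d0'.baseChange B s, by rw [map_sub, hd0']; abel⟩

theorem cohBaseChange_injective_of_retraction (hd : d1 ∘ₗ d0 = 0) (r : M1 →ₗ[A] ker d1)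
    (hr : r ∘ₗ (ker d1).subtype = LinearMap.id) :
    Function.Injective (cohBaseChange A B d0 d1) := by
  let q : ker d1 →ₗ[A] coh A d0 d1 := Submodule.mkQ _
  have hq : (q ∘ₗ r) ∘ₗ d0 = 0 := by
    ext x
    have hx : d0 x ∈ ker d1 := range_le_ker_iff.mpr hd ⟨x, rfl⟩
    have hr' : r (d0 x) = ⟨d0 x, hx⟩ := congr($hr ⟨d0 x, hx⟩)
    simp [q, hr', Submodule.Quotient.mk_eq_zero]
  let ψ : coh B (d0.baseChange B) (d1.baseChange B) →ₗ[B] B ⊗[A] coh A d0 d1 :=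
    Submodule.liftQ _ ((q ∘ₗ r).baseChange B ∘ₗ (ker (d1.baseChange B)).subtype) <| by
      rintro x ⟨t, ht⟩
      rw [Submodule.coe_subtype] at ht
      rw [mem_ker, comp_apply, Submodule.coe_subtype, ← ht, ← comp_apply, ← baseChange_comp, hq,
        baseChange_zero, LinearMap.zero_apply]
  have hψ : ψ ∘ₗ Submodule.mkQ _ =
      (q ∘ₗ r).baseChange B ∘ₗ (ker (d1.baseChange B)).subtype :=
    -- not `Submodule.liftQ_mkQ`: the additive structures on `coh B _ _` only agree up to unfolding
    LinearMap.ext fun _ => rfl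
  have hψφ : ψ ∘ₗ cohBaseChange A B d0 d1 = LinearMap.id := by
    rw [← cancel_right (baseChange_surjective B (Submodule.mkQ_surjective _)), comp_assoc,
      cohBaseChange_comp_baseChange_mkQ, ← comp_assoc, hψ, comp_assoc, baseChangeKer,
      subtype_comp_codRestrict, ← baseChange_comp, comp_assoc, hr, comp_id, id_comp]
  exact Function.LeftInverse.injective (congr($hψφ ·))

end General

section SplitKernel

variable {A : Type*} [CommRing A] {M N : Type*} [AddCommGroup M] [AddCommGroup N]
  [Module A M] [Module A N] (d : M →ₗ[A] N)

theorem baseChangeKer_surjective_iff_injective_lTensor_liftQ (B : Type*) [CommRing B]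
    [Algebra A B] :
    Function.Surjective (baseChangeKer B d) ↔
      Function.Injective (((ker d).liftQ d le_rfl).lTensor B) := by
  have hfactor :
      ⇑(d.baseChange B) = ((ker d).liftQ d le_rfl).lTensor B ∘ (ker d).mkQ.lTensor B := by
    rw [baseChange_eq_ltensor, ← coe_comp, ← lTensor_comp, Submodule.liftQ_mkQ]
  have hexact := lTensor_mkQ B (ker d)
  constructor
  · intro h
    rw [← ker_eq_bot, eq_bot_iff]
    intro y hy
    obtain ⟨x, rfl⟩ := lTensor_surjective B (Submodule.mkQ_surjective (ker d)) y
    obtain ⟨w, hw⟩ := h ⟨x, by rwa [mem_ker, hfactor, Function.comp_apply]⟩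
    rw [Submodule.mem_bot, ← mem_ker, hexact]
    exact ⟨w, by simpa [baseChangeKer, baseChange_eq_ltensor] using congr(Subtype.val $hw)⟩
  · rintro h ⟨x, hx⟩
    rw [mem_ker, hfactor, Function.comp_apply,
      ← map_zero (((ker d).liftQ d le_rfl).lTensor B)] at hx
    obtain ⟨w, hw⟩ := hexact.le (h hx)
    exact ⟨w, Subtype.ext (by simpa [baseChangeKer, baseChange_eq_ltensor] using hw)⟩

theorem exists_retraction_ker_subtype_of_leftInverse_liftQ [Module.Projective A N]
    (u' : N →ₗ[A] M ⧸ ker d) (hu' : u' ∘ₗ (ker d).liftQ d le_rfl = LinearMap.id) :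
    ∃ r : M →ₗ[A] ker d, r ∘ₗ (ker d).subtype = LinearMap.id := by
  have : Module.Projective A (M ⧸ ker d) := .of_split _ u' hu'
  exact ((Function.Exact.split_tfae (LinearMap.exact_subtype_mkQ _) Subtype.val_injective
    (Submodule.mkQ_surjective _)).out 0 1).mp
      (Module.projective_lifting_property _ _ (Submodule.mkQ_surjective _))

end SplitKernel

theorem stmt8_general {A : Type*} [CommRing A] [IsLocalRing A]
    {F1 : Type*} [AddCommGroup F1] [Module A F1]
    {F2 : Type*} [AddCommGroup F2] [Module A F2] [Module.Finite A F2]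
    {F3 : Type*} [AddCommGroup F3] [Module A F3] [Module.Free A F3] [Module.Finite A F3]
    (d1 : F1 →ₗ[A] F2) (d2 : F2 →ₗ[A] F3)
    (hc12 : d2 ∘ₗ d1 = 0)
    (hp : Function.Surjective (cohBaseChange A (ResidueField A) d1 d2))
    (B : Type*) [CommRing B] [Algebra A B] :
    Function.Bijective (cohBaseChange A B d1 d2) := by
  obtain ⟨u', hu'⟩ := (IsLocalRing.split_injective_iff_lTensor_residueField_injective _).mpr <|
    (baseChangeKer_surjective_iff_injective_lTensor_liftQ d2 _).mp <|
      baseChangeKer_surjective_of_cohBaseChange_surjective d1 d2 hc12 hp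
  obtain ⟨r, hr⟩ := exists_retraction_ker_subtype_of_leftInverse_liftQ d2 u' hu'
  have hinj : Function.Injective (((ker d2).liftQ d2 le_rfl).lTensor B) :=
    Function.LeftInverse.injective (g := u'.lTensor B) fun y => by
      rw [← comp_apply, ← lTensor_comp, hu', lTensor_id, id_apply]
  exact ⟨cohBaseChange_injective_of_retraction d1 d2 hc12 r hr,
    cohBaseChange_surjective_of_baseChangeKer_surjective d1 d2 <|
      (baseChangeKer_surjective_iff_injective_lTensor_liftQ d2 B).mpr hinj⟩

theorem stmt8 {A : Type*} [CommRing A] [IsLocalRing A] [IsNoetherianRing A]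
    {F0 : Type*} [AddCommGroup F0] [Module A F0] [Module.Free A F0] [Module.Finite A F0]
    {F1 : Type*} [AddCommGroup F1] [Module A F1] [Module.Free A F1] [Module.Finite A F1]
    {F2 : Type*} [AddCommGroup F2] [Module A F2] [Module.Free A F2] [Module.Finite A F2]
    {F3 : Type*} [AddCommGroup F3] [Module A F3] [Module.Free A F3] [Module.Finite A F3]
    (d0 : F0 →ₗ[A] F1) (d1 : F1 →ₗ[A] F2) (d2 : F2 →ₗ[A] F3)
    (hc01 : d1 ∘ₗ d0 = 0) (hc12 : d2 ∘ₗ d1 = 0)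
    (hp : Function.Surjective (cohBaseChange A (ResidueField A) d1 d2))
    (hpm1 : Function.Surjective (cohBaseChange A (ResidueField A) d0 d1))
    (B : Type*) [CommRing B] [Algebra A B] :
    Function.Bijective (cohBaseChange A B d1 d2) :=
  stmt8_general d1 d2 hc12 hp B
end

section
/- Let $(A, \mathfrak{m}, k)$ be a noetherian local ring and $(F^\bullet, d^\bullet)$ a cochain complex of free $A$-modules of finite rank. If both $\ker d^{p-1}$ and $\operatorname{im} d^{p-1}$ are direct summands of $F^{p-1}$ and $F^p$ respectively, then the base change map $\varphi^{p-1} \colon H^{p-1}(F^\bullet) \otimes_A k \to H^{p-1}(F^\bullet \otimes_A k)$ is surjective. Conversely, if $\varphi^p$ is surjective and $H^p(F^\bullet)$ is free, then $\ker d^{p-1}$ and $\operatorname{im} d^{p-1}$ are direct summands of $F^{p-1}$ and $F^p$ respectively. -/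
open TensorProduct IsLocalRing

open TensorProduct

/-
Both directions rest on a criterion for surjectivity of `φ`: every cocycle of `F ⊗ k` must be,
modulo coboundaries, the image of a cocycle of `F`.

If `ker d1` and `range d1` are direct summands, then `d1` has a quasi-inverse `s` with
`d1 s d1 = d1`. This identity survives base change, and `1 - s d1` then carries every cocycle of
`F ⊗ k` into the image of `k ⊗ ker d1`.

Conversely, the criterion at `F2` keeps the injection `F2 ⧸ ker d2 → F3` injective after `k ⊗ -`,
so over the local ring `A` it splits, and `ker d2` is a direct summand of `F2`. As
`H = ker d2 ⧸ range d1` is free, `range d1` is a direct summand of `ker d2`, hence of `F2`; so it is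
projective, and `ker d1` is a direct summand because `F1 ⧸ ker d1 ≅ range d1`.
-/

namespace LinearMap

variable {R M N : Type*} [CommRing R] [AddCommGroup M] [AddCommGroup N] [Module R M] [Module R N]

theorem isComplemented_ker_of_comp_eq_id {f : M →ₗ[R] N} {g : N →ₗ[R] M} (h : f ∘ₗ g = id) :
    IsComplemented (ker f) := by
  have hidem : IsIdempotentElem (g ∘ₗ f) :=
    show (g ∘ₗ f) ∘ₗ (g ∘ₗ f) = g ∘ₗ f by rw [comp_assoc, ← comp_assoc f, h, id_comp]
  have hsurj : range f = ⊤ :=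
    range_eq_top.mpr (Function.HasRightInverse.surjective ⟨g, LinearMap.congr_fun h⟩)
  have hinj : ker g = ⊥ :=
    ker_eq_bot.mpr (Function.HasLeftInverse.injective ⟨f, LinearMap.congr_fun h⟩)
  refine ⟨range g, ?_⟩
  simpa [range_comp_of_range_eq_top g hsurj, ker_comp_of_ker_eq_bot f hinj] using
    (IsIdempotentElem.isCompl hidem).symm

theorem isComplemented_ker_of_projective_range (f : M →ₗ[R] N) [Module.Projective R (range f)] :
    IsComplemented (ker f) := by
  obtain ⟨g, hg⟩ := f.rangeRestrict.exists_rightInverse_of_surjective f.range_rangeRestrict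
  simpa using isComplemented_ker_of_comp_eq_id hg

theorem exists_comp_comp_eq_self_of_isComplemented {d : M →ₗ[R] N} (hK : IsComplemented (ker d))
    (hB : IsComplemented (range d)) : ∃ s : N →ₗ[R] M, d ∘ₗ s ∘ₗ d = d := by
  obtain ⟨W, hW⟩ := hK
  obtain ⟨U, hU⟩ := hB
  refine ⟨W.subtype ∘ₗ (Submodule.quotientEquivOfIsCompl _ W hW).toLinearMap ∘ₗ
    d.quotKerEquivRange.symm.toLinearMap ∘ₗ (range d).projectionOnto U hU, ?_⟩
  ext x
  have hx : x - W.projection (ker d) hW.symm x ∈ ker d := Submodule.sub_projection_mem hW.symm x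
  rw [mem_ker, map_sub, sub_eq_zero] at hx
  simp only [comp_apply, LinearEquiv.coe_coe, Submodule.subtype_apply,
    Submodule.projectionOnto_apply_of_mem_left hU (mem_range_self d x),
    quotKerEquivRange_symm_apply_image, Submodule.mkQ_apply,
    Submodule.quotientEquivOfIsCompl_apply_mk, Submodule.coe_projectionOnto_apply]
  exact hx.symm

end LinearMap

namespace Submodule

variable {R M : Type*} [CommRing R] [AddCommGroup M] [Module R M]

theorem isComplemented_of_projective_quotient (p : Submodule R M) [Module.Projective R (M ⧸ p)] :
    IsComplemented p := by
  obtain ⟨g, hg⟩ := p.mkQ.exists_rightInverse_of_surjective p.range_mkQ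
  simpa using LinearMap.isComplemented_ker_of_comp_eq_id hg

theorem projective_of_isComplemented [Module.Projective R M] {p : Submodule R M}
    (hp : IsComplemented p) : Module.Projective R p := by
  obtain ⟨q, hpq⟩ := hp
  exact .of_split p.subtype _ (p.projectionOnto_comp_subtype hpq)

theorem isComplemented_of_comap_subtype {p q : Submodule R M} (hpq : p ≤ q)
    (hq : IsComplemented q) (hp : IsComplemented (p.comap q.subtype)) : IsComplemented p := by
  obtain ⟨Q, hQ⟩ := hq
  obtain ⟨P, hP⟩ := hp
  let π : M →ₗ[R] p := (comapSubtypeEquivOfLe hpq).toLinearMap ∘ₗ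
    (p.comap q.subtype).projectionOnto P hP ∘ₗ q.projectionOnto Q hQ
  refine ⟨_, LinearMap.isCompl_of_proj (f := π) fun x => ?_⟩
  ext
  simp [π, projectionOnto_apply_of_mem_left hQ (hpq x.2), comapSubtypeEquivOfLe,
    projectionOnto_apply_of_mem_left hP (show (⟨x, hpq x.2⟩ : q) ∈ p.comap q.subtype from x.2)]

end Submodule

namespace LinearMap

variable {A k : Type*} [CommRing A] [CommRing k] [Algebra A k]
variable {M N P : Type*} [AddCommGroup M] [AddCommGroup N] [AddCommGroup P]
  [Module A M] [Module A N] [Module A P]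

theorem ker_baseChange_le_range_of_comp_comp_eq {d : M →ₗ[A] N} {s : N →ₗ[A] M}
    (h : d ∘ₗ s ∘ₗ d = d) :
    ker (d.baseChange k) ≤ range ((ker d).subtype.baseChange k) := by
  have hπ (x : M) : (id - s ∘ₗ d : M →ₗ[A] M) x ∈ ker d := by
    rw [mem_ker, sub_apply, map_sub, id_apply, comp_apply, ← comp_apply s d, ← comp_apply d, h,
      sub_self]
  intro v hv
  refine ⟨((id - s ∘ₗ d).codRestrict (ker d) hπ).baseChange k v, ?_⟩
  rw [← comp_apply, ← baseChange_comp, subtype_comp_codRestrict, baseChange_sub, baseChange_id,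
    baseChange_comp, sub_apply, comp_apply, mem_ker.mp hv, map_zero, sub_zero, id_apply]

theorem range_baseChange_le_range_ker_subtype {d1 : M →ₗ[A] N} {d2 : N →ₗ[A] P}
    (h : d2 ∘ₗ d1 = 0) :
    range (d1.baseChange k) ≤ range ((ker d2).subtype.baseChange k) := by
  rw [← subtype_comp_codRestrict (f := d1) (ker d2) (fun x => range_le_ker_iff.mpr h ⟨x, rfl⟩),
    baseChange_comp]
  exact range_comp_le_range _ _

theorem injective_baseChange_liftQ_ker {d : M →ₗ[A] N}
    (h : ker (d.baseChange k) ≤ range ((ker d).subtype.baseChange k)) :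
    Function.Injective (((ker d).liftQ d le_rfl).baseChange k) := by
  rw [← ker_eq_bot, eq_bot_iff]
  intro u hu
  obtain ⟨v, rfl⟩ := baseChange_surjective k (ker d).mkQ_surjective u
  rw [mem_ker, ← comp_apply, ← baseChange_comp, Submodule.liftQ_mkQ] at hu
  obtain ⟨t, rfl⟩ := h hu
  have hmkQ : (ker d).mkQ ∘ₗ (ker d).subtype = 0 := range_le_ker_iff.mp (by simp)
  rw [← comp_apply, ← baseChange_comp, hmkQ, baseChange_zero]
  rfl

theorem isComplemented_ker_of_ker_baseChange_le [IsLocalRing A] [Module.Finite A M]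
    [Module.Free A N] [Module.Finite A N] {d : M →ₗ[A] N}
    (h : ker (d.baseChange (ResidueField A)) ≤
      range ((ker d).subtype.baseChange (ResidueField A))) :
    IsComplemented (ker d) := by
  obtain ⟨l, hl⟩ := (split_injective_iff_lTensor_residueField_injective
    ((ker d).liftQ d le_rfl)).mpr <| by
      rw [← baseChange_eq_ltensor]
      exact injective_baseChange_liftQ_ker h
  have := Module.Projective.of_split _ l hl
  exact (ker d).isComplemented_of_projective_quotient

end LinearMap

section CohBaseChange

variable {A k : Type*} [CommRing A] [CommRing k] [Algebra A k]
variable {M0 M1 M2 : Type*} [AddCommGroup M0] [AddCommGroup M1] [AddCommGroup M2]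
  [Module A M0] [Module A M1] [Module A M2]

theorem subtype_comp_liftBaseChange_kerBaseChange (d1 : M1 →ₗ[A] M2) :
    (LinearMap.ker (d1.baseChange k)).subtype ∘ₗ (kerBaseChange A k d1).liftBaseChange k =
      (LinearMap.ker d1).subtype.baseChange k := by
  ext x
  change ((kerBaseChange A k d1).liftBaseChange k (1 ⊗ₜ x) : k ⊗[A] M1) = 1 ⊗ₜ (x : M1)
  rw [LinearMap.liftBaseChange_tmul, one_smul]
  rfl

theorem cohBaseChange_comp_baseChange_mkQ_s19 (d0 : M0 →ₗ[A] M1) (d1 : M1 →ₗ[A] M2) :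
    cohBaseChange A k d0 d1 ∘ₗ
        (Submodule.mkQ ((LinearMap.range d0).comap (LinearMap.ker d1).subtype)).baseChange k =
      Submodule.mkQ _ ∘ₗ (kerBaseChange A k d1).liftBaseChange k := by
  ext x
  simp [cohBaseChange]

theorem cohBaseChange_surjective_iff (d0 : M0 →ₗ[A] M1) (d1 : M1 →ₗ[A] M2) :
    Function.Surjective (cohBaseChange A k d0 d1) ↔
      LinearMap.ker (d1.baseChange k) ≤
        LinearMap.range ((LinearMap.ker d1).subtype.baseChange k) ⊔
          LinearMap.range (d0.baseChange k) := by
  set ι := (kerBaseChange A k d1).liftBaseChange k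
  have hι (a) : (ι a : k ⊗[A] M1) = (LinearMap.ker d1).subtype.baseChange k a :=
    LinearMap.congr_fun (subtype_comp_liftBaseChange_kerBaseChange d1) a
  have hφ (a) : cohBaseChange A k d0 d1 ((Submodule.mkQ _).baseChange k a) =
      Submodule.Quotient.mk (ι a) :=
    LinearMap.congr_fun (cohBaseChange_comp_baseChange_mkQ_s19 d0 d1) a
  have hmkQ := LinearMap.baseChange_surjective k
    (Submodule.mkQ_surjective ((LinearMap.range d0).comap (LinearMap.ker d1).subtype))
  constructor
  · intro h v hv
    obtain ⟨w, hw⟩ := h (Submodule.Quotient.mk ⟨v, hv⟩)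
    obtain ⟨a, rfl⟩ := hmkQ w
    rw [hφ, Submodule.Quotient.eq] at hw
    have hv' : v = (LinearMap.ker d1).subtype.baseChange k a - ((ι a : k ⊗[A] M1) - v) := by
      rw [hι, sub_sub_cancel]
    rw [hv']
    exact sub_mem (Submodule.mem_sup_left ⟨a, rfl⟩) (Submodule.mem_sup_right hw)
  · intro h q
    obtain ⟨⟨v, hv⟩, rfl⟩ := Submodule.Quotient.mk_surjective _ q
    obtain ⟨_, ⟨a, rfl⟩, _, ⟨y, rfl⟩, hsum⟩ := Submodule.mem_sup.mp (h hv)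
    refine ⟨(Submodule.mkQ _).baseChange k a, ?_⟩
    rw [hφ, Submodule.Quotient.eq]
    show (ι a : k ⊗[A] M1) - v ∈ LinearMap.range (d0.baseChange k)
    rw [hι, ← hsum, sub_add_cancel_left, neg_mem_iff]
    exact ⟨y, rfl⟩

end CohBaseChange

theorem stmt19_general {A : Type*} [CommRing A] [IsLocalRing A]
    {F0 : Type*} [AddCommGroup F0] [Module A F0]
    {F1 : Type*} [AddCommGroup F1] [Module A F1]
    {F2 : Type*} [AddCommGroup F2] [Module A F2] [Module.Free A F2] [Module.Finite A F2]
    {F3 : Type*} [AddCommGroup F3] [Module A F3] [Module.Free A F3] [Module.Finite A F3]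
    (d0 : F0 →ₗ[A] F1) (d1 : F1 →ₗ[A] F2) (d2 : F2 →ₗ[A] F3)
    (hc12 : d2 ∘ₗ d1 = 0) :
    ((∃ W : Submodule A F1, IsCompl (LinearMap.ker d1) W) ∧
      (∃ U : Submodule A F2, IsCompl (LinearMap.range d1) U) →
      Function.Surjective (cohBaseChange A (ResidueField A) d0 d1)) ∧
    (Function.Surjective (cohBaseChange A (ResidueField A) d1 d2) →
      Module.Free A (coh A d1 d2) →
      (∃ W : Submodule A F1, IsCompl (LinearMap.ker d1) W) ∧
      (∃ U : Submodule A F2, IsCompl (LinearMap.range d1) U)) := by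
  constructor
  · rintro ⟨hK, hB⟩
    obtain ⟨s, hs⟩ := LinearMap.exists_comp_comp_eq_self_of_isComplemented hK hB
    exact (cohBaseChange_surjective_iff d0 d1).mpr
      (le_sup_of_le_left (LinearMap.ker_baseChange_le_range_of_comp_comp_eq hs))
  · intro hsurj hfree
    have hZ : IsComplemented (LinearMap.ker d2) :=
      LinearMap.isComplemented_ker_of_ker_baseChange_le <|
        ((cohBaseChange_surjective_iff d1 d2).mp hsurj).trans
          (sup_le le_rfl (LinearMap.range_baseChange_le_range_ker_subtype hc12))
    have hBZ : IsComplemented ((LinearMap.range d1).comap (LinearMap.ker d2).subtype) :=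
      Submodule.isComplemented_of_projective_quotient _
    have hB : IsComplemented (LinearMap.range d1) :=
      Submodule.isComplemented_of_comap_subtype (LinearMap.range_le_ker_iff.mpr hc12) hZ hBZ
    have := Submodule.projective_of_isComplemented hB
    exact ⟨d1.isComplemented_ker_of_projective_range, hB⟩

theorem stmt19 {A : Type*} [CommRing A] [IsLocalRing A] [IsNoetherianRing A]
    {F0 : Type*} [AddCommGroup F0] [Module A F0] [Module.Free A F0] [Module.Finite A F0]
    {F1 : Type*} [AddCommGroup F1] [Module A F1] [Module.Free A F1] [Module.Finite A F1]
    {F2 : Type*} [AddCommGroup F2] [Module A F2] [Module.Free A F2] [Module.Finite A F2]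
    {F3 : Type*} [AddCommGroup F3] [Module A F3] [Module.Free A F3] [Module.Finite A F3]
    (d0 : F0 →ₗ[A] F1) (d1 : F1 →ₗ[A] F2) (d2 : F2 →ₗ[A] F3)
    (hc01 : d1 ∘ₗ d0 = 0) (hc12 : d2 ∘ₗ d1 = 0) :
    ((∃ W : Submodule A F1, IsCompl (LinearMap.ker d1) W) ∧
      (∃ U : Submodule A F2, IsCompl (LinearMap.range d1) U) →
      Function.Surjective (cohBaseChange A (ResidueField A) d0 d1)) ∧
    (Function.Surjective (cohBaseChange A (ResidueField A) d1 d2) →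
      Module.Free A (coh A d1 d2) →
      (∃ W : Submodule A F1, IsCompl (LinearMap.ker d1) W) ∧
      (∃ U : Submodule A F2, IsCompl (LinearMap.range d1) U)) :=
  stmt19_general d0 d1 d2 hc12
end
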